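/- The order function u ↦ ν(u) is locally constant on the amoeba complement: if u and u' lie in the same connected component E of ℝ^n ∖ 𝒜_p, then ν(u) = ν(u'). -/

import Mathlib

open MeasureTheory Real

noncomputable section

/-- Evaluation of the Laurent polynomial with support `A` and coefficients `c`
at the point `z`. -/
def lEval {n : ℕ} (A : Finset (Fin n → ℤ)) (c : (Fin n → ℤ) → ℂ)
    (z : Fin n → ℂ) : ℂ :=
  ∑ α ∈ A, c α * ∏ i, z i ^ α i

/-- The coordinatewise logarithm of moduli. -/
def logMap {n : ℕ} (z : Fin n → ℂ) : Fin n → ℝ :=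
  fun i => Real.log ‖z i‖

/-- The amoeba of the Laurent polynomial with support `A` and coefficients `c`. -/
def amoeba {n : ℕ} (A : Finset (Fin n → ℤ)) (c : (Fin n → ℤ) → ℂ) :
    Set (Fin n → ℝ) :=
  logMap '' {z | (∀ i, z i ≠ 0) ∧ lEval A c z = 0}

/-- The point of the complex torus with radial coordinates `e^u` and angles `θ`. -/
def tPt {n : ℕ} (u θ : Fin n → ℝ) : Fin n → ℂ :=
  fun i => Complex.exp (u i + θ i * Complex.I)

/-- The cube `[0, 2π]^n`. -/
def cube (n : ℕ) : Set (Fin n → ℝ) := Set.univ.pi fun _ => Set.Icc 0 (2 * π)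

/-- The order vector of a point `u` in the amoeba complement. -/
def order {n : ℕ} (A : Finset (Fin n → ℤ)) (c : (Fin n → ℤ) → ℂ)
    (u : Fin n → ℝ) : Fin n → ℂ := fun j =>
  (((2 * π) ^ n : ℝ) : ℂ)⁻¹ *
    ∫ θ in cube n,
      (∑ α ∈ A, c α * (α j : ℂ) * ∏ i, tPt u θ i ^ α i) / lEval A c (tPt u θ)

/-- The Ronkin function. -/
def ronkin {n : ℕ} (A : Finset (Fin n → ℤ)) (c : (Fin n → ℤ) → ℂ)
    (x : Fin n → ℝ) : ℝ :=
  ((2 * π) ^ n)⁻¹ * ∫ θ in cube n, Real.log ‖lEval A c (tPt x θ)‖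

/-- The Newton polytope of the support `A`. -/
def newton {n : ℕ} (A : Finset (Fin n → ℤ)) : Set (Fin n → ℝ) :=
  convexHull ℝ ((fun (α : Fin n → ℤ) (i : Fin n) => (α i : ℝ)) '' (A : Set (Fin n → ℤ)))

end

/-! In angular coordinates `ν_j(u)` is the mean over the cube of `θ ↦ f (tPt u θ)`, where
`f = (z_j ∂p/∂z_j) / p` is holomorphic near every torus `Log⁻¹(v)` with `v ∉ 𝒜_p`. Freezing all
angles but the `k`-th, moving `u_k` along a segment of the amoeba complement only changes the
radius of a circle integral of `f(z) dz / z` across an annulus where this form is holomorphic, so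
by Cauchy's theorem nothing changes. Any two points of a small box around `u` are joined by such
coordinate moves, so `ν` is locally constant on the (open) amoeba complement, hence constant on
its connected components. -/

open Set Filter Topology Function

lemma exp_log_norm_add_arg_mul_I {z : ℂ} (hz : z ≠ 0) :
    Complex.exp (Real.log ‖z‖ + z.arg * Complex.I) = z := by
  rw [← Complex.log_re, ← Complex.log_im, Complex.re_add_im, Complex.exp_log hz]

section Torus

variable {n : ℕ} {A : Finset (Fin n → ℤ)} {c : (Fin n → ℤ) → ℂ}

lemma tPt_ne_zero (u θ : Fin n → ℝ) (i : Fin n) : tPt u θ i ≠ 0 :=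
  Complex.exp_ne_zero _

lemma logMap_tPt (u θ : Fin n → ℝ) : logMap (tPt u θ) = u := by
  funext i
  simp [logMap, tPt, Complex.norm_exp]

lemma tPt_logMap_arg {z : Fin n → ℂ} (hz : ∀ i, z i ≠ 0) :
    tPt (logMap z) (fun i => Complex.arg (z i)) = z :=
  funext fun i => exp_log_norm_add_arg_mul_I (hz i)

lemma continuous_tPt : Continuous fun p : (Fin n → ℝ) × (Fin n → ℝ) => tPt p.1 p.2 := by
  unfold tPt
  fun_prop

lemma differentiableAt_lEval {z : Fin n → ℂ} (hz : ∀ i, z i ≠ 0) :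
    DifferentiableAt ℂ (lEval A c) z := by
  unfold lEval
  fun_prop (disch := exact Or.inl (hz _))

lemma lEval_tPt_ne_zero {u : Fin n → ℝ} (hu : u ∉ amoeba A c) (θ : Fin n → ℝ) :
    lEval A c (tPt u θ) ≠ 0 := fun h =>
  hu ⟨tPt u θ, ⟨tPt_ne_zero u θ, h⟩, logMap_tPt u θ⟩

lemma mem_amoeba_iff {u : Fin n → ℝ} :
    u ∈ amoeba A c ↔ ∃ θ ∈ univ.pi fun _ => Icc (-π) π, lEval A c (tPt u θ) = 0 := by
  constructor
  · rintro ⟨z, ⟨hz, hz0⟩, rfl⟩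
    refine ⟨fun i => Complex.arg (z i), fun i _ => ?_, by rwa [tPt_logMap_arg hz]⟩
    exact ⟨(Complex.neg_pi_lt_arg _).le, Complex.arg_le_pi _⟩
  · rintro ⟨θ, -, hθ⟩
    exact ⟨tPt u θ, ⟨tPt_ne_zero u θ, hθ⟩, logMap_tPt u θ⟩

lemma isClosed_amoeba : IsClosed (amoeba A c) := by
  refine isOpen_compl_iff.1 <| isOpen_iff_mem_nhds.2 fun u hu => ?_
  have hK : IsCompact (univ.pi fun _ : Fin n => Icc (-π) π) :=
    isCompact_univ_pi fun _ => isCompact_Icc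
  have hne (θ : Fin n → ℝ) :
      ∀ᶠ p : (Fin n → ℝ) × (Fin n → ℝ) in 𝓝 (u, θ), lEval A c (tPt p.1 p.2) ≠ 0 := by
    have hcont : ContinuousAt (fun p : (Fin n → ℝ) × (Fin n → ℝ) => lEval A c (tPt p.1 p.2))
        (u, θ) :=
      (differentiableAt_lEval (tPt_ne_zero u θ)).continuousAt.comp_of_eq
        continuous_tPt.continuousAt rfl
    exact hcont.eventually_ne (lEval_tPt_ne_zero hu θ)
  filter_upwards [hK.eventually_forall_of_forall_eventually
    (P := fun v θ => lEval A c (tPt v θ) ≠ 0) fun θ _ => hne θ] with v hv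
  rw [mem_compl_iff, mem_amoeba_iff]
  rintro ⟨θ, hθK, hθ⟩
  exact hv θ hθK hθ

end Torus

lemma setIntegral_exp_circle_eq {E : Type*} [NormedAddCommGroup E] [NormedSpace ℂ E]
    [CompleteSpace E] {h : ℂ → E} {a b : ℝ}
    (hd : ∀ z : ℂ, z ≠ 0 → Real.log ‖z‖ ∈ uIcc a b → DifferentiableAt ℂ h z) :
    ∫ θ in Icc 0 (2 * π), h (Complex.exp (a + θ * Complex.I)) =
      ∫ θ in Icc 0 (2 * π), h (Complex.exp (b + θ * Complex.I)) := by
  wlog hab : a ≤ b generalizing a b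
  · exact (this (uIcc_comm a b ▸ hd) (le_of_not_ge hab)).symm
  have hcircle (r : ℝ) : (∮ z in C(0, Real.exp r), z⁻¹ • h z) =
      Complex.I • ∫ θ in Icc 0 (2 * π), h (Complex.exp (r + θ * Complex.I)) := by
    rw [circleIntegral_def_Icc, ← integral_smul]
    refine setIntegral_congr_fun measurableSet_Icc fun θ _ => ?_
    have hmap : circleMap 0 (Real.exp r) θ = Complex.exp (r + θ * Complex.I) := by
      simp [circleMap, Complex.exp_add]
    rw [deriv_circleMap, hmap, smul_smul, mul_right_comm,
      mul_inv_cancel₀ (Complex.exp_ne_zero _), one_mul]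
  have hann : ∀ z ∈ Metric.closedBall 0 (Real.exp b) \ Metric.ball 0 (Real.exp a),
      DifferentiableAt ℂ (fun z => z⁻¹ • h z) z := by
    rintro z ⟨hzb, hza⟩
    rw [Metric.mem_closedBall, dist_zero_right] at hzb
    rw [Metric.mem_ball, dist_zero_right, not_lt] at hza
    have hpos : 0 < ‖z‖ := (Real.exp_pos a).trans_le hza
    have hz : z ≠ 0 := norm_pos_iff.1 hpos
    refine (differentiableAt_inv hz).smul (hd z hz ?_)
    rw [uIcc_of_le hab]
    exact ⟨(Real.le_log_iff_exp_le hpos).2 hza, (Real.log_le_iff_le_exp hpos).2 hzb⟩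
  have hradius := Complex.circleIntegral_eq_of_differentiable_on_annulus_off_countable
    (Real.exp_pos a) (Real.exp_le_exp.2 hab) countable_empty
    (fun z hz => (hann z hz).continuousAt.continuousWithinAt)
    (fun z hz => hann z ⟨Metric.ball_subset_closedBall hz.1.1,
      fun hz' => hz.1.2 (Metric.ball_subset_closedBall hz')⟩)
  rw [hcircle, hcircle] at hradius
  exact (smul_right_injective E Complex.I_ne_zero hradius).symm

lemma cube_eq_Icc (n : ℕ) : cube n = Icc 0 fun _ => 2 * π := by
  rw [← pi_univ_Icc]
  rfl

lemma isCompact_cube (n : ℕ) : IsCompact (cube n) :=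
  isCompact_univ_pi fun _ => isCompact_Icc

lemma setIntegral_cube_succ {E : Type*} [NormedAddCommGroup E] [NormedSpace ℝ E] {n : ℕ}
    (k : Fin (n + 1)) {f : (Fin (n + 1) → ℝ) → E} (hf : IntegrableOn f (cube (n + 1))) :
    ∫ θ in cube (n + 1), f θ = ∫ y in cube n, ∫ x in Icc 0 (2 * π), f (k.insertNth x y) := by
  set e : ℝ × (Fin n → ℝ) ≃ᵐ (Fin (n + 1) → ℝ) :=
    (MeasurableEquiv.piFinSuccAbove (fun _ => ℝ) k).symm
  have he : MeasurePreserving e :=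
    (volume_preserving_piFinSuccAbove (fun _ : Fin (n + 1) => ℝ) k).symm _
  have hpre : e ⁻¹' cube (n + 1) = Icc 0 (2 * π) ×ˢ cube n := by
    rw [cube_eq_Icc, cube_eq_Icc]
    exact ((Fin.insertNthOrderIso (fun _ => ℝ) k).preimage_Icc _ _).trans (Icc_prod_eq _ _)
  have hint : IntegrableOn (f ∘ e) (Icc 0 (2 * π) ×ˢ cube n) := by
    rwa [← hpre, he.integrableOn_comp_preimage e.measurableEmbedding]
  rw [← he.map_eq, setIntegral_map_equiv, hpre, Measure.volume_eq_prod, ← Measure.prod_restrict,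
    integral_prod_symm]
  · rfl
  · rwa [Measure.prod_restrict, ← Measure.volume_eq_prod]

lemma tPt_update_insertNth {n : ℕ} (v : Fin (n + 1) → ℝ) (k : Fin (n + 1)) (s x : ℝ)
    (y : Fin n → ℝ) :
    tPt (update v k s) (k.insertNth x y) =
      update (tPt v (k.insertNth 0 y)) k (Complex.exp (s + x * Complex.I)) := by
  funext i
  rcases k.eq_self_or_eq_succAbove i with rfl | ⟨j, rfl⟩
  · simp [tPt]
  · simp [tPt, k.succAbove_ne j]

lemma setIntegral_cube_tPt_update_eq {E : Type*} [NormedAddCommGroup E] [NormedSpace ℂ E]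
    [CompleteSpace E] {n : ℕ} {f : (Fin n → ℂ) → E} {v : Fin n → ℝ} {k : Fin n} {t : ℝ}
    (hf : ∀ s ∈ uIcc (v k) t, ∀ θ, DifferentiableAt ℂ f (tPt (update v k s) θ)) :
    ∫ θ in cube n, f (tPt (update v k t) θ) = ∫ θ in cube n, f (tPt v θ) := by
  rcases n with _ | n
  · exact k.elim0
  have hint : ∀ s ∈ uIcc (v k) t,
      IntegrableOn (fun θ => f (tPt (update v k s) θ)) (cube (n + 1)) :=
    fun s hs => ContinuousOn.integrableOn_compact (isCompact_cube _) fun θ _ =>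
      ((hf s hs θ).continuousAt.comp_of_eq
        (continuous_tPt.comp (Continuous.prodMk_right _)).continuousAt rfl).continuousWithinAt
  conv_rhs => rw [← update_eq_self k v]
  rw [setIntegral_cube_succ k (hint t right_mem_uIcc),
    setIntegral_cube_succ k (hint (v k) left_mem_uIcc)]
  congr 1
  funext y
  simp_rw [tPt_update_insertNth]
  refine setIntegral_exp_circle_eq (h := fun z => f (update (tPt v (k.insertNth 0 y)) k z))
    fun z hz hlog => ?_
  have hpt : update (tPt v (k.insertNth 0 y)) k z =
      tPt (update v k (Real.log ‖z‖)) (k.insertNth z.arg y) := by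
    rw [tPt_update_insertNth, exp_log_norm_add_arg_mul_I hz]
  refine DifferentiableAt.comp z ?_
    (hasFDerivAt_update (𝕜 := ℂ) (E := fun _ => ℂ) _ z).differentiableAt
  rw [hpt]
  exact hf _ (uIcc_comm t (v k) ▸ hlog) _

lemma eq_of_mem_pi_of_update_eq {ι α β : Type*} [Fintype ι] [DecidableEq ι] {S : ι → Set α}
    {f : (ι → α) → β} (hf : ∀ v ∈ univ.pi S, ∀ k, ∀ t ∈ S k, f (update v k t) = f v)
    {v w : ι → α} (hv : v ∈ univ.pi S) (hw : w ∈ univ.pi S) : f w = f v := by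
  suffices ∀ s : Finset ι, f (s.piecewise w v) = f v by simpa using this Finset.univ
  intro s
  induction s using Finset.induction_on with
  | empty => simp
  | insert k s _ ih =>
    rw [Finset.piecewise_insert, hf _ (s.piecewise_mem_set_pi hw hv) k (w k) (hw k trivial), ih]

section Order

variable {n : ℕ} {A : Finset (Fin n → ℤ)} {c : (Fin n → ℤ) → ℂ}

lemma order_apply (u : Fin n → ℝ) (j : Fin n) :
    order A c u j = (((2 * π) ^ n : ℝ) : ℂ)⁻¹ *
      ∫ θ in cube n, lEval A (fun α => c α * α j) (tPt u θ) / lEval A c (tPt u θ) :=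
  rfl

lemma differentiableAt_lEval_div (c' : (Fin n → ℤ) → ℂ) {u : Fin n → ℝ} (hu : u ∉ amoeba A c)
    (θ : Fin n → ℝ) :
    DifferentiableAt ℂ (fun z => lEval A c' z / lEval A c z) (tPt u θ) :=
  ((differentiableAt_lEval (tPt_ne_zero u θ)).mul
    ((differentiableAt_lEval (tPt_ne_zero u θ)).inv (lEval_tPt_ne_zero hu θ)))

lemma order_update_eq {v : Fin n → ℝ} {k : Fin n} {t : ℝ}
    (hseg : ∀ s ∈ uIcc (v k) t, update v k s ∉ amoeba A c) :
    order A c (update v k t) = order A c v := by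
  funext j
  rw [order_apply, order_apply, setIntegral_cube_tPt_update_eq fun s hs θ =>
    differentiableAt_lEval_div (fun α => c α * α j) (hseg s hs) θ]

lemma order_eventually_eq {u : Fin n → ℝ} (hu : u ∉ amoeba A c) :
    ∀ᶠ v in 𝓝 u, order A c v = order A c u := by
  obtain ⟨ε, hε, hball⟩ := Metric.isOpen_iff.1 isClosed_amoeba.isOpen_compl u hu
  filter_upwards [Metric.ball_mem_nhds u hε] with v hv
  rw [ball_pi u hε] at hball hv
  refine eq_of_mem_pi_of_update_eq (fun w hw k t ht => order_update_eq fun s hs => ?_)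
    (mem_univ_pi.2 fun i => Metric.mem_ball_self hε) hv
  refine hball ((update_mem_pi_iff_of_mem hw).2 fun _ => ?_)
  exact (convex_ball (u k) ε).ordConnected.uIcc_subset (hw k trivial) ht hs

end Order

theorem stmt_6_general {n : ℕ} (A : Finset (Fin n → ℤ)) (c : (Fin n → ℤ) → ℂ)
    (u u' : Fin n → ℝ) (hu : u ∈ (amoeba A c)ᶜ)
    (hu' : u' ∈ connectedComponentIn (amoeba A c)ᶜ u) :
    order A c u = order A c u' :=
  eq_of_germ_isConstant_on
    (fun v hv => ⟨order A c v, order_eventually_eq (connectedComponentIn_subset _ _ hv)⟩)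
    isPreconnected_connectedComponentIn (mem_connectedComponentIn hu) hu'

/-- The order function is constant on each connected component of the amoeba
complement: if `u` and `u'` lie in the same connected component of
`ℝⁿ ∖ 𝒜_p`, then `ν(u) = ν(u')`. -/
theorem stmt_6 {n : ℕ} (A : Finset (Fin n → ℤ)) (c : (Fin n → ℤ) → ℂ)
    (hA : A.Nonempty) (hc : ∀ α ∈ A, c α ≠ 0)
    (u u' : Fin n → ℝ) (hu : u ∈ (amoeba A c)ᶜ)
    (hu' : u' ∈ connectedComponentIn (amoeba A c)ᶜ u) :
    order A c u = order A c u' :=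
  stmt_6_general A c u u' hu hu'
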